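/- Let (X,T) be a TDS with metric d and μ an ergodic invariant measure. Then for every ε > 0, h̄_μ^{BK}(T,ε) ≤ h_top^P(T, G_μ, d, ε/10), where G_μ is the set of generic points of μ. -/

import Mathlib

/-!
Suppose `s ≥ 0` has `𝒫(T, G_μ, s, ε/10) = 0` but `s < h̄^{BK}_μ(T, ε)`. Then some `r > s` is exceeded
by the upper local entropy on a set of positive measure, which may be taken inside `G_μ` because
generic points have full measure (Birkhoff's ergodic theorem, obtained from the maximal ergodic
theorem and tested on a countable dense set of continuous functions). Given any countable cover
`(Z_i)` of `G_μ`, some `Z_i` still carries positive outer measure of such points. Each of them has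
`μ(B_n(x, ε)) ≤ e^{-rn}` for infinitely many `n`; comparing with the summable `e^{-(r-s)n}`
(Borel–Cantelli), for arbitrarily large `n` the points with this property at time `n` have outer
measure at least `e^{-(r-s)n}`. A maximal `(n, ε/5)`-separated subset of them covers them by
`(n, ε)`-balls, so it has at least `e^{sn}` elements, and the closed `(n, ε/10)`-balls around its
points are disjoint. Hence `P(T, Z_i, s, ε/10) ≥ 1` for every such cover, contradicting
`𝒫(T, G_μ, s, ε/10) = 0`.
-/

open MeasureTheory Filter Set Metric Topology ENNReal

variable {X : Type*} [MetricSpace X]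

/-- The `n`-th Bowen metric `d_n(x,y) = max_{0 ≤ j ≤ n-1} d(T^j x, T^j y)`. -/
noncomputable def bowenDist (T : X → X) (n : ℕ) (x y : X) : ℝ :=
  ⨆ j ∈ Finset.range n, dist (T^[j] x) (T^[j] y)

/-- The open Bowen ball of order `n` and radius `ε`. -/
def bowenBall (T : X → X) (n : ℕ) (x : X) (ε : ℝ) : Set X :=
  {y | bowenDist T n x y < ε}

/-- The closed Bowen ball of order `n` and radius `ε`. -/
def bowenClosedBall (T : X → X) (n : ℕ) (x : X) (ε : ℝ) : Set X :=
  {y | bowenDist T n x y ≤ ε}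

/-- `F` is `(n,ε)`-separated. -/
def IsBowenSeparated (T : X → X) (n : ℕ) (ε : ℝ) (F : Set X) : Prop :=
  ∀ x ∈ F, ∀ y ∈ F, x ≠ y → ε < bowenDist T n x y

/-- Maximal cardinality of an `(n,ε)`-separated subset of `Z`. -/
noncomputable def sepNum (T : X → X) (n : ℕ) (ε : ℝ) (Z : Set X) : ℕ :=
  sSup {k | ∃ F : Finset X, ↑F ⊆ Z ∧ IsBowenSeparated T n ε ↑F ∧ F.card = k}

/-- A finite Borel measurable partition of `X`. -/
def IsMeasPartition [MeasurableSpace X] (P : Finset (Set X)) : Prop :=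
  (∀ A ∈ P, MeasurableSet A) ∧ (∀ A ∈ P, ∀ B ∈ P, A ≠ B → Disjoint A B) ∧
    (⋃ A ∈ P, A) = Set.univ

/-- A finite open cover of `X`. -/
def IsOpenCover (U : Finset (Set X)) : Prop :=
  (∀ A ∈ U, IsOpen A) ∧ (⋃ A ∈ U, A) = Set.univ

/-- The `n`-th join `⋁_{j=0}^{n-1} T^{-j} P` of a finite family of sets. -/
noncomputable def joinPart (T : X → X) (P : Finset (Set X)) (n : ℕ) : Finset (Set X) := by
  classical
  exact (Fintype.piFinset (fun _ : Fin n => P)).image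
    (fun f => ⋂ j : Fin n, T^[(j : ℕ)] ⁻¹' f j)

/-- Static entropy of a finite partition. -/
noncomputable def partEntropy [MeasurableSpace X] (μ : Measure X) (P : Finset (Set X)) : ℝ :=
  ∑ A ∈ P, Real.negMulLog (μ A).toReal

/-- Kolmogorov–Sinai entropy of `T` w.r.t. the partition `P`. -/
noncomputable def ksEntropyPart [MeasurableSpace X] (T : X → X) (μ : Measure X)
    (P : Finset (Set X)) : ℝ :=
  limsup (fun n => partEntropy μ (joinPart T P n) / n) atTop

/-- Kolmogorov–Sinai entropy of `(X,T,μ)`. -/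
noncomputable def ksEntropy [MeasurableSpace X] (T : X → X) (μ : Measure X) : ℝ≥0∞ :=
  ⨆ (P : Finset (Set X)) (_ : IsMeasPartition P), ENNReal.ofReal (ksEntropyPart T μ P)

/-- `N_μ(V, c)`: the minimal cardinality of a subfamily of `V` whose union has
measure at least `c`. -/
noncomputable def coverNum [MeasurableSpace X] (μ : Measure X) (V : Finset (Set X)) (c : ℝ) : ℕ :=
  sInf {k | ∃ W : Finset (Set X), W ⊆ V ∧ W.card = k ∧ ENNReal.ofReal c ≤ μ (⋃ A ∈ W, A)}

/-- Shapira's entropy of the open cover `U` at level `δ`. -/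
noncomputable def shapiraEnt [MeasurableSpace X] (T : X → X) (μ : Measure X)
    (U : Finset (Set X)) (δ : ℝ) : ℝ :=
  limsup (fun n => Real.log (coverNum μ (joinPart T U n) δ) / n) atTop

/-- `R_μ^δ(T,n,ε)`: minimal number of Bowen `(n,ε)`-balls whose union has measure `> 1 - δ`. -/
noncomputable def katokCovNum [MeasurableSpace X] (T : X → X) (μ : Measure X) (n : ℕ)
    (ε δ : ℝ) : ℕ :=
  sInf {k | ∃ E : Finset X, E.card = k ∧
    1 - ENNReal.ofReal δ < μ (⋃ x ∈ E, bowenBall T n x ε)}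

/-- Upper Katok `ε`-entropy at level `δ`. -/
noncomputable def katokUpperδ [MeasurableSpace X] (T : X → X) (μ : Measure X) (ε δ : ℝ) : ℝ≥0∞ :=
  limsup (fun n => ENNReal.ofReal (Real.log (katokCovNum T μ n ε δ)) / n) atTop

/-- Lower Katok `ε`-entropy at level `δ`. -/
noncomputable def katokLowerδ [MeasurableSpace X] (T : X → X) (μ : Measure X) (ε δ : ℝ) : ℝ≥0∞ :=
  liminf (fun n => ENNReal.ofReal (Real.log (katokCovNum T μ n ε δ)) / n) atTop

/-- Upper Katok `ε`-entropy: the limit of `katokUpperδ` as `δ → 0`. -/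
noncomputable def katokUpper [MeasurableSpace X] (T : X → X) (μ : Measure X) (ε : ℝ) : ℝ≥0∞ :=
  ⨆ δ ∈ Set.Ioo (0 : ℝ) 1, katokUpperδ T μ ε δ

/-- Lower Katok `ε`-entropy: the limit of `katokLowerδ` as `δ → 0`. -/
noncomputable def katokLower [MeasurableSpace X] (T : X → X) (μ : Measure X) (ε : ℝ) : ℝ≥0∞ :=
  ⨆ δ ∈ Set.Ioo (0 : ℝ) 1, katokLowerδ T μ ε δ

/-- `-log μ(S)`, as an extended nonnegative real (`∞` when `μ S = 0`). -/
noncomputable def negLogMeas [MeasurableSpace X] (μ : Measure X) (S : Set X) : ℝ≥0∞ :=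
  if μ S = 0 then ⊤ else ENNReal.ofReal (-Real.log (μ S).toReal)

/-- Upper Brin–Katok local `ε`-entropy of `μ`. -/
noncomputable def bkUpper [MeasurableSpace X] (T : X → X) (μ : Measure X) (ε : ℝ) : ℝ≥0∞ :=
  ∫⁻ x, limsup (fun n => negLogMeas μ (bowenBall T n x ε) / n) atTop ∂μ

/-- Lower Brin–Katok local `ε`-entropy of `μ`. -/
noncomputable def bkLower [MeasurableSpace X] (T : X → X) (μ : Measure X) (ε : ℝ) : ℝ≥0∞ :=
  ∫⁻ x, liminf (fun n => negLogMeas μ (bowenBall T n x ε) / n) atTop ∂μ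

/-- `∑ e^{-s n_i}` over a family of (center, order) pairs. -/
noncomputable def weightSum (s : ℝ) (I : Set (X × ℕ)) : ℝ≥0∞ :=
  ∑' p : I, ENNReal.ofReal (Real.exp (-(s * ((p : X × ℕ).2 : ℝ))))

/-- Carathéodory–Pesin Bowen pre-measure `M(T,d,Z,s,N,ε)`. -/
noncomputable def bowenPre (T : X → X) (Z : Set X) (s : ℝ) (N : ℕ) (ε : ℝ) : ℝ≥0∞ :=
  ⨅ (I : Set (X × ℕ)) (_ : I.Countable ∧ (∀ p ∈ I, N ≤ p.2) ∧
      Z ⊆ ⋃ p ∈ I, bowenBall T p.2 p.1 ε), weightSum s I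

/-- `M(T,d,Z,s,ε) = lim_{N→∞} M(T,d,Z,s,N,ε)`. -/
noncomputable def bowenCP (T : X → X) (Z : Set X) (s : ℝ) (ε : ℝ) : ℝ≥0∞ :=
  ⨆ N, bowenPre T Z s N ε

/-- Bowen `ε`-entropy of the subset `Z`: the critical value of `s ↦ M(T,d,Z,s,ε)`. -/
noncomputable def bowenEnt (T : X → X) (Z : Set X) (ε : ℝ) : ℝ≥0∞ :=
  sInf {a : ℝ≥0∞ | ∃ s : ℝ, 0 ≤ s ∧ a = ENNReal.ofReal s ∧ bowenCP T Z s ε = 0}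

/-- Packing pre-measure `P(T,d,Z,s,N,ε)`: supremum of `∑ e^{-n_i s}` over pairwise disjoint
families of closed Bowen balls with centers in `Z` and orders `≥ N`. -/
noncomputable def packPre (T : X → X) (Z : Set X) (s : ℝ) (N : ℕ) (ε : ℝ) : ℝ≥0∞ :=
  ⨆ (I : Set (X × ℕ)) (_ : I.Countable ∧ (∀ p ∈ I, N ≤ p.2 ∧ p.1 ∈ Z) ∧
      I.PairwiseDisjoint (fun p => bowenClosedBall T p.2 p.1 ε)), weightSum s I

/-- `P(T,d,Z,s,ε) = lim_{N→∞} P(T,d,Z,s,N,ε)`. -/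
noncomputable def packCP (T : X → X) (Z : Set X) (s : ℝ) (ε : ℝ) : ℝ≥0∞ :=
  ⨅ N, packPre T Z s N ε

/-- `𝒫(T,d,Z,s,ε) = inf {∑_i P(T,d,Z_i,s,ε) : Z ⊆ ⋃ Z_i}`. -/
noncomputable def packOuter (T : X → X) (Z : Set X) (s : ℝ) (ε : ℝ) : ℝ≥0∞ :=
  ⨅ (Zs : ℕ → Set X) (_ : Z ⊆ ⋃ i, Zs i), ∑' i, packCP T (Zs i) s ε

/-- Packing `ε`-entropy of the subset `Z`: critical value of `s ↦ 𝒫(T,d,Z,s,ε)`. -/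
noncomputable def packEnt (T : X → X) (Z : Set X) (ε : ℝ) : ℝ≥0∞ :=
  sInf {a : ℝ≥0∞ | ∃ s : ℝ, 0 ≤ s ∧ a = ENNReal.ofReal s ∧ packOuter T Z s ε = 0}

/-- Packing topological entropy of a subset: `lim_{ε → 0} h_top^P(T,Z,d,ε)`. -/
noncomputable def packEntTotal (T : X → X) (Z : Set X) : ℝ≥0∞ :=
  ⨆ (ε : ℝ) (_ : 0 < ε), packEnt T Z ε

/-- Katok-type Bowen pre-measure `M^δ(T,d,μ,s,N,ε)` for a measure `μ`. -/
noncomputable def bowenPreMeas [MeasurableSpace X] (T : X → X) (μ : Measure X) (s : ℝ)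
    (N : ℕ) (ε δ : ℝ) : ℝ≥0∞ :=
  ⨅ (I : Set (X × ℕ)) (_ : I.Countable ∧ (∀ p ∈ I, N ≤ p.2) ∧
      1 - ENNReal.ofReal δ < μ (⋃ p ∈ I, bowenBall T p.2 p.1 ε)), weightSum s I

/-- The critical value `M^δ(T,d,μ,ε)`. -/
noncomputable def bowenEntMeasδ [MeasurableSpace X] (T : X → X) (μ : Measure X)
    (ε δ : ℝ) : ℝ≥0∞ :=
  sInf {a : ℝ≥0∞ | ∃ s : ℝ, 0 ≤ s ∧ a = ENNReal.ofReal s ∧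
    (⨆ N, bowenPreMeas T μ s N ε δ) = 0}

/-- `M_μ(T,d,ε) = lim_{δ → 0} M^δ(T,d,μ,ε)`. -/
noncomputable def bowenEntMeas [MeasurableSpace X] (T : X → X) (μ : Measure X) (ε : ℝ) : ℝ≥0∞ :=
  ⨆ δ ∈ Set.Ioo (0 : ℝ) 1, bowenEntMeasδ T μ ε δ

/-- `𝒫^δ(T,d,μ,s,ε) = inf {∑_i P(T,d,Z_i,s,ε) : μ(⋃ Z_i) > 1 - δ}`. -/
noncomputable def packOuterMeas [MeasurableSpace X] (T : X → X) (μ : Measure X) (s : ℝ)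
    (ε δ : ℝ) : ℝ≥0∞ :=
  ⨅ (Zs : ℕ → Set X) (_ : 1 - ENNReal.ofReal δ < μ (⋃ i, Zs i)), ∑' i, packCP T (Zs i) s ε

/-- The critical value `𝒫^δ(T,d,μ,ε)`. -/
noncomputable def packEntMeasδ [MeasurableSpace X] (T : X → X) (μ : Measure X)
    (ε δ : ℝ) : ℝ≥0∞ :=
  sInf {a : ℝ≥0∞ | ∃ s : ℝ, 0 ≤ s ∧ a = ENNReal.ofReal s ∧ packOuterMeas T μ s ε δ = 0}

/-- `𝒫_μ(T,d,ε) = lim_{δ → 0} 𝒫^δ(T,d,μ,ε)`. -/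
noncomputable def packEntMeas [MeasurableSpace X] (T : X → X) (μ : Measure X) (ε : ℝ) : ℝ≥0∞ :=
  ⨆ δ ∈ Set.Ioo (0 : ℝ) 1, packEntMeasδ T μ ε δ

/-- The `n`-th empirical measure `(1/n) ∑_{j=0}^{n-1} δ_{T^j x}`. -/
noncomputable def empMeas [MeasurableSpace X] (T : X → X) (x : X) (n : ℕ) : Measure X :=
  (n : ℝ≥0∞)⁻¹ • ∑ j ∈ Finset.range n, Measure.dirac (T^[j] x)

set_option linter.unusedSectionVars false in
lemma empMeas_finite [MeasurableSpace X] (T : X → X) (x : X) (n : ℕ) :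
    IsFiniteMeasure (empMeas T x n) := by
  refine ⟨?_⟩
  have h : (∑ j ∈ Finset.range n, Measure.dirac (T^[j] x)) Set.univ = n := by
    rw [Measure.finset_sum_apply]
    simp
  rw [empMeas, Measure.smul_apply, smul_eq_mul, h]
  rcases eq_or_ne (n : ℝ≥0∞) 0 with h0 | h0
  · simp [h0]
  · rw [ENNReal.inv_mul_cancel h0 (by simp)]
    exact ENNReal.one_lt_top

/-- The `n`-th empirical measure as a finite measure. -/
noncomputable def empFM [MeasurableSpace X] (T : X → X) (x : X) (n : ℕ) : FiniteMeasure X :=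
  ⟨empMeas T x n, empMeas_finite T x n⟩

/-- The set of generic points of `μ`: points whose empirical measures converge weakly to `μ`. -/
def genPts [MeasurableSpace X] [OpensMeasurableSpace X] (T : X → X) (μ : Measure X) [IsFiniteMeasure μ] : Set X :=
  {x | Tendsto (fun n => empFM T x n) atTop (𝓝 (⟨μ, ‹_›⟩ : FiniteMeasure X))}

/-- `X_{n,F}`: points whose `n`-th empirical measure lies in `F`. -/
def XnF [MeasurableSpace X] [OpensMeasurableSpace X] (T : X → X) (F : Set (FiniteMeasure X)) (n : ℕ) : Set X :=
  {x | empFM T x n ∈ F}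

/-- Pfister–Sullivan `ε`-entropy of `μ`. -/
noncomputable def psEnt [MeasurableSpace X] [OpensMeasurableSpace X] (T : X → X) (μ : Measure X) [IsFiniteMeasure μ]
    (ε : ℝ) : ℝ≥0∞ :=
  ⨅ (F : Set (FiniteMeasure X)) (_ : F ∈ 𝓝 (show FiniteMeasure X from ⟨μ, ‹_›⟩)),
    limsup (fun n => ENNReal.ofReal (Real.log (sepNum T n ε (XnF T F n)) / n)) atTop

/-- `limsup_{ε → 0⁺} f(ε)/log(1/ε)`. -/
noncomputable def mmUpper (f : ℝ → ℝ≥0∞) : ℝ≥0∞ :=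
  limsup (fun ε : ℝ => f ε / ENNReal.ofReal (Real.log (1 / ε))) (𝓝[>] (0 : ℝ))

/-- `liminf_{ε → 0⁺} f(ε)/log(1/ε)`. -/
noncomputable def mmLower (f : ℝ → ℝ≥0∞) : ℝ≥0∞ :=
  liminf (fun ε : ℝ => f ε / ENNReal.ofReal (Real.log (1 / ε))) (𝓝[>] (0 : ℝ))

/-- Bowen upper metric mean dimension of a subset. -/
noncomputable def mdimBUpper (T : X → X) (Z : Set X) : ℝ≥0∞ :=
  mmUpper (fun ε => bowenEnt T Z ε)

/-- Packing upper metric mean dimension of a subset. -/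
noncomputable def mdimPUpper (T : X → X) (Z : Set X) : ℝ≥0∞ :=
  mmUpper (fun ε => packEnt T Z ε)

/-- Packing lower metric mean dimension of a subset. -/
noncomputable def mdimPLower (T : X → X) (Z : Set X) : ℝ≥0∞ :=
  mmLower (fun ε => packEnt T Z ε)

open BoundedContinuousFunction

section MaximalErgodic

variable {α : Type*} {T : α → α} {g : α → ℝ}

noncomputable def maxBirkhoffSum (T : α → α) (g : α → ℝ) (N : ℕ) : α → ℝ :=
  (Finset.range (N + 1)).sup' Finset.nonempty_range_add_one (birkhoffSum T g)

lemma birkhoffSum_le_maxBirkhoffSum {k N : ℕ} (hk : k ≤ N) (x : α) :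
    birkhoffSum T g k x ≤ maxBirkhoffSum T g N x := by
  rw [maxBirkhoffSum, Finset.sup'_apply]
  exact Finset.le_sup' (fun k => birkhoffSum T g k x) (Finset.mem_range_succ_iff.2 hk)

lemma maxBirkhoffSum_nonneg (N : ℕ) (x : α) : 0 ≤ maxBirkhoffSum T g N x :=
  (birkhoffSum_zero T g x).symm.trans_le (birkhoffSum_le_maxBirkhoffSum N.zero_le x)

lemma maxBirkhoffSum_mono : Monotone (maxBirkhoffSum T g) := fun N M hNM x => by
  rw [maxBirkhoffSum, Finset.sup'_apply]
  exact Finset.sup'_le _ _ fun k hk =>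
    birkhoffSum_le_maxBirkhoffSum ((Finset.mem_range_succ_iff.1 hk).trans hNM) x

lemma zero_lt_maxBirkhoffSum_iff {N : ℕ} {x : α} :
    0 < maxBirkhoffSum T g N x ↔ ∃ k ≤ N, 0 < birkhoffSum T g k x := by
  simp [maxBirkhoffSum, Finset.sup'_apply, Finset.lt_sup'_iff]

lemma maxBirkhoffSum_le_max_zero_add (N : ℕ) (x : α) :
    maxBirkhoffSum T g N x ≤ max 0 (g x + maxBirkhoffSum T g N (T x)) := by
  rw [maxBirkhoffSum, Finset.sup'_apply]
  refine Finset.sup'_le _ _ fun k hk => ?_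
  rcases k with _ | k
  · exact (birkhoffSum_zero T g x).trans_le (le_max_left _ _)
  · rw [birkhoffSum_succ']
    have hkN : k ≤ N := by simp at hk; omega
    exact le_max_of_le_right (add_le_add_right (birkhoffSum_le_maxBirkhoffSum hkN _) _)

variable [MeasurableSpace α] {μ : Measure α}

lemma Measurable.birkhoffSum (hg : Measurable g) (hT : Measurable T) (n : ℕ) :
    Measurable (birkhoffSum T g n) :=
  Finset.measurable_sum _ fun k _ => hg.comp (hT.iterate k)

lemma Measurable.maxBirkhoffSum (hg : Measurable g) (hT : Measurable T) (N : ℕ) :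
    Measurable (maxBirkhoffSum T g N) :=
  Finset.sup'_induction _ _ (fun _ h₁ _ h₂ => h₁.sup h₂) fun k _ => hg.birkhoffSum hT k

lemma MeasureTheory.Integrable.birkhoffSum (hg : Integrable g μ) (hT : MeasurePreserving T μ μ)
    (n : ℕ) : Integrable (birkhoffSum T g n) μ :=
  integrable_finsetSum _ fun k _ => (hT.iterate k).integrable_comp_of_integrable hg

lemma MeasureTheory.Integrable.maxBirkhoffSum (hg : Integrable g μ)
    (hT : MeasurePreserving T μ μ) (N : ℕ) : Integrable (maxBirkhoffSum T g N) μ :=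
  Finset.sup'_induction (p := (Integrable · μ)) _ _ (fun _ h₁ _ h₂ => h₁.sup h₂)
    fun k _ => hg.birkhoffSum hT k

theorem setIntegral_maxBirkhoffSum_pos_nonneg (hT : MeasurePreserving T μ μ)
    (hgm : Measurable g) (hg : Integrable g μ) (N : ℕ) :
    0 ≤ ∫ x in {x | 0 < maxBirkhoffSum T g N x}, g x ∂μ := by
  set M := maxBirkhoffSum T g N
  set A := {x | 0 < M x}
  have hMm : Measurable M := hgm.maxBirkhoffSum hT.measurable N
  have hMi : Integrable M μ := hg.maxBirkhoffSum hT N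
  have hMTi : Integrable (M ∘ T) μ := hT.integrable_comp_of_integrable hMi
  have hA : MeasurableSet A := measurableSet_lt measurable_const hMm
  have hle : ∀ x ∈ A, M x ≤ g x + M (T x) := fun x hx =>
    (le_max_iff.1 (maxBirkhoffSum_le_max_zero_add N x)).resolve_left (not_le.2 hx)
  have hint : ∫ x, M x ∂μ ≤ ∫ x in A, g x ∂μ + ∫ x, M x ∂μ :=
    calc ∫ x, M x ∂μ = ∫ x in A, M x ∂μ :=
          (setIntegral_eq_integral_of_forall_compl_eq_zero fun x hx =>
            le_antisymm (not_lt.1 hx) (maxBirkhoffSum_nonneg N x)).symm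
      _ ≤ ∫ x in A, (g x + M (T x)) ∂μ :=
          setIntegral_mono_on hMi.integrableOn (hg.add hMTi).integrableOn hA hle
      _ = ∫ x in A, g x ∂μ + ∫ x in A, M (T x) ∂μ :=
          integral_add hg.integrableOn hMTi.integrableOn
      _ ≤ ∫ x in A, g x ∂μ + ∫ x, M (T x) ∂μ := add_le_add le_rfl
          (setIntegral_le_integral hMTi (ae_of_all _ fun x => maxBirkhoffSum_nonneg N (T x)))
      _ = ∫ x in A, g x ∂μ + ∫ x, M x ∂μ := by
          rw [← integral_map hT.aemeasurable hMm.aestronglyMeasurable, hT.map_eq]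
  linarith

/-- The maximal ergodic theorem. -/
theorem setIntegral_exists_birkhoffSum_pos_nonneg (hT : MeasurePreserving T μ μ)
    (hgm : Measurable g) (hg : Integrable g μ) :
    0 ≤ ∫ x in {x | ∃ n, 0 < birkhoffSum T g n x}, g x ∂μ := by
  have hU : {x | ∃ n, 0 < birkhoffSum T g n x} = ⋃ N, {x | 0 < maxBirkhoffSum T g N x} := by
    ext x
    rw [mem_iUnion]
    simp_rw [mem_ofPred, zero_lt_maxBirkhoffSum_iff]
    exact ⟨fun ⟨n, hn⟩ => ⟨n, n, le_rfl, hn⟩, fun ⟨_, k, _, hk⟩ => ⟨k, hk⟩⟩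
  rw [hU]
  refine ge_of_tendsto' (tendsto_setIntegral_of_monotone
    (fun N => measurableSet_lt measurable_const (hgm.maxBirkhoffSum hT.measurable N))
    (fun N M hNM x hx => lt_of_lt_of_le hx (maxBirkhoffSum_mono hNM x)) hg.integrableOn)
    fun N => setIntegral_maxBirkhoffSum_pos_nonneg hT hgm hg N

end MaximalErgodic

section BirkhoffAverage

variable {α : Type*} {T : α → α} {C : ℝ}

lemma norm_birkhoffAverage_le {E : Type*} [NormedAddCommGroup E] [NormedSpace ℝ E] {f : α → E}
    (hf : ∀ x, ‖f x‖ ≤ C) (n : ℕ) (x : α) : ‖birkhoffAverage ℝ T f n x‖ ≤ C := by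
  rcases n.eq_zero_or_pos with rfl | hn
  · simpa using (norm_nonneg _).trans (hf x)
  have hn' : (0 : ℝ) < n := by exact_mod_cast hn
  calc ‖birkhoffAverage ℝ T f n x‖ ≤ (n : ℝ)⁻¹ * ∑ _k ∈ Finset.range n, C := by
        rw [birkhoffAverage, norm_smul, norm_inv, Real.norm_natCast]
        gcongr
        exact norm_sum_le_of_le _ fun k _ => hf _
    _ = C := by simp [field]

variable {f : α → ℝ}

lemma isBoundedUnder_le_birkhoffAverage (hf : ∀ x, ‖f x‖ ≤ C) (x : α) :
    IsBoundedUnder (· ≤ ·) atTop (birkhoffAverage ℝ T f · x) :=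
  isBoundedUnder_of ⟨C, fun n => (abs_le.1 (norm_birkhoffAverage_le hf n x)).2⟩

lemma isBoundedUnder_ge_birkhoffAverage (hf : ∀ x, ‖f x‖ ≤ C) (x : α) :
    IsBoundedUnder (· ≥ ·) atTop (birkhoffAverage ℝ T f · x) :=
  isBoundedUnder_of ⟨-C, fun n => (abs_le.1 (norm_birkhoffAverage_le hf n x)).1⟩

lemma limsup_add_of_tendsto_zero {ι : Type*} {l : Filter ι} [l.NeBot] {u w : ι → ℝ}
    (hu : IsBoundedUnder (· ≤ ·) l u) (hu' : IsBoundedUnder (· ≥ ·) l u)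
    (hw : Tendsto w l (𝓝 0)) : limsup (u + w) l = limsup u l :=
  le_antisymm
    ((limsup_add_le hu' hu hw.isBoundedUnder_ge.isCoboundedUnder_le hw.isBoundedUnder_le).trans_eq
      (by rw [hw.limsup_eq, add_zero]))
    ((le_limsup_add hu hu'.isCoboundedUnder_le hw.isBoundedUnder_le
      hw.isBoundedUnder_ge).trans_eq' (by rw [hw.liminf_eq, add_zero]))

lemma limsup_birkhoffAverage_apply (hf : ∀ x, ‖f x‖ ≤ C) (x : α) :
    limsup (birkhoffAverage ℝ T f · (T x)) atTop =
      limsup (birkhoffAverage ℝ T f · x) atTop := by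
  have hbdd : Bornology.IsBounded (range f) :=
    isBounded_iff_forall_norm_le.2 ⟨C, forall_mem_range.2 hf⟩
  convert limsup_add_of_tendsto_zero (isBoundedUnder_le_birkhoffAverage hf x)
    (isBoundedUnder_ge_birkhoffAverage hf x)
    (tendsto_birkhoffAverage_apply_sub_birkhoffAverage' ℝ hbdd T x) using 2
  ext n
  simp

lemma exists_birkhoffSum_sub_pos_of_lt_limsup (hf : ∀ x, ‖f x‖ ≤ C) {a : ℝ} {x : α}
    (hx : a < limsup (birkhoffAverage ℝ T f · x) atTop) :
    ∃ n, 0 < birkhoffSum T (f - fun _ => a) n x := by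
  obtain ⟨n, han, hn⟩ := ((frequently_lt_of_lt_limsup
    (isBoundedUnder_ge_birkhoffAverage hf x).isCoboundedUnder_le hx).and_eventually
    (eventually_ge_atTop 1)).exists
  have hn' : (0 : ℝ) < n := by exact_mod_cast hn
  rw [birkhoffAverage, smul_eq_mul, lt_inv_mul_iff₀ hn'] at han
  refine ⟨n, ?_⟩
  simp only [birkhoffSum, Pi.sub_apply, Finset.sum_sub_distrib, Finset.sum_const,
    Finset.card_range, nsmul_eq_mul] at han ⊢
  linarith

variable [MeasurableSpace α] {μ : Measure α} [IsProbabilityMeasure μ]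

lemma measure_lt_limsup_birkhoffAverage_eq_zero (hμ : Ergodic T μ) (hfm : Measurable f)
    (hf : ∀ x, ‖f x‖ ≤ C) {a : ℝ} (ha : ∫ x, f x ∂μ < a) :
    μ {x | a < limsup (birkhoffAverage ℝ T f · x) atTop} = 0 := by
  set A := {x | a < limsup (birkhoffAverage ℝ T f · x) atTop}
  have hA : MeasurableSet A := measurableSet_lt measurable_const
    (Measurable.limsup fun n => (hfm.birkhoffSum hμ.measurable n).const_smul (n : ℝ)⁻¹)
  have hTA : T ⁻¹' A = A := by
    ext x
    simp only [A, mem_preimage, mem_ofPred, limsup_birkhoffAverage_apply hf x]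
  refine (hμ.measure_self_or_compl_eq_zero hA hTA).resolve_right fun hAc => ?_
  -- Otherwise almost every point has a positive Birkhoff sum of `f - a`, so the maximal ergodic
  -- theorem gives `0 ≤ ∫ (f - a)`, contradicting `∫ f < a`.
  have hfi : Integrable f μ := .of_bound hfm.aestronglyMeasurable C (ae_of_all _ hf)
  have hconull : μ.restrict {x | ∃ n, 0 < birkhoffSum T (f - fun _ => a) n x} = μ :=
    Measure.restrict_eq_self_of_ae_mem <| measure_mono_null
      (compl_subset_compl.2 fun x hx => exists_birkhoffSum_sub_pos_of_lt_limsup hf hx) hAc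
  have h := setIntegral_exists_birkhoffSum_pos_nonneg hμ.toMeasurePreserving
    (hfm.sub measurable_const) (hfi.sub (integrable_const a))
  rw [hconull] at h
  simp only [Pi.sub_apply] at h
  rw [integral_sub hfi (integrable_const a), integral_const] at h
  simp only [probReal_univ, smul_eq_mul, one_mul] at h
  linarith

theorem ae_limsup_birkhoffAverage_le (hμ : Ergodic T μ) (hfm : Measurable f)
    (hf : ∀ x, ‖f x‖ ≤ C) :
    ∀ᵐ x ∂μ, limsup (birkhoffAverage ℝ T f · x) atTop ≤ ∫ x, f x ∂μ := by
  have h : ∀ᵐ x ∂μ, ∀ k : ℕ,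
      limsup (birkhoffAverage ℝ T f · x) atTop ≤ ∫ x, f x ∂μ + 1 / (k + 1) := by
    refine ae_all_iff.2 fun k => ?_
    simpa only [ae_iff, not_le] using measure_lt_limsup_birkhoffAverage_eq_zero hμ hfm hf
      (lt_add_of_pos_right _ Nat.one_div_pos_of_nat)
  have ht : Tendsto (fun k : ℕ => ∫ x, f x ∂μ + 1 / ((k : ℝ) + 1)) atTop
      (𝓝 (∫ x, f x ∂μ)) := by
    simpa using tendsto_one_div_add_atTop_nhds_zero_nat.const_add (∫ x, f x ∂μ)
  filter_upwards [h] with x hx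
  exact ge_of_tendsto' ht hx

theorem ae_tendsto_birkhoffAverage (hμ : Ergodic T μ) (hfm : Measurable f)
    (hf : ∀ x, ‖f x‖ ≤ C) :
    ∀ᵐ x ∂μ, Tendsto (birkhoffAverage ℝ T f · x) atTop (𝓝 (∫ x, f x ∂μ)) := by
  have hf' : ∀ x, ‖(-f) x‖ ≤ C := by simpa using hf
  filter_upwards [ae_limsup_birkhoffAverage_le hμ hfm hf,
    ae_limsup_birkhoffAverage_le hμ hfm.neg hf'] with x hup hlow
  simp only [Pi.neg_apply, integral_neg] at hlow
  refine tendsto_order.2 ⟨fun b hb => ?_, fun b hb =>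
    eventually_lt_of_limsup_lt (hup.trans_lt hb) (isBoundedUnder_le_birkhoffAverage hf x)⟩
  have h := eventually_lt_of_limsup_lt (hlow.trans_lt (neg_lt_neg hb))
    (isBoundedUnder_le_birkhoffAverage (T := T) hf' x)
  exact h.mono fun n hn => by simpa [birkhoffAverage_neg] using hn

end BirkhoffAverage

section MeasureLemmas

variable {α : Type*} [MeasurableSpace α]

lemma frequently_le_measure_of_subset_limsup (μ : Measure α) {a : ℕ → ℝ≥0∞}
    (ha : ∑' n, a n ≠ ∞) {E : ℕ → Set α} {W : Set α} (hW : W ⊆ limsup E atTop)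
    (hpos : 0 < μ W) : ∃ᶠ n in atTop, a n ≤ μ (E n) := by
  by_contra h
  obtain ⟨N, hN⟩ :=
    ((not_frequently.1 h).mono fun n hn => (not_le.1 hn).le).exists_forall_of_atTop
  have hsum : ∑' n, μ (E (n + N)) ≠ ∞ :=
    ne_top_of_le_ne_top ha ((ENNReal.tsum_le_tsum fun n => hN _ (Nat.le_add_left N n)).trans
      (ENNReal.tsum_comp_le_tsum_of_injective (add_left_injective N) a))
  have hnull := measure_limsup_atTop_eq_zero hsum
  rw [limsup_nat_add E N] at hnull
  exact hpos.ne' (measure_mono_null hW hnull)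

lemma tsum_ofReal_exp_neg_mul_ne_top {θ : ℝ} (hθ : 0 < θ) :
    ∑' n : ℕ, ENNReal.ofReal (Real.exp (-(θ * n))) ≠ ∞ := by
  have hq : ENNReal.ofReal (Real.exp (-θ)) < 1 :=
    ENNReal.ofReal_lt_one.2 (Real.exp_lt_one_iff.2 (neg_lt_zero.2 hθ))
  have hpow : ∀ n : ℕ,
      ENNReal.ofReal (Real.exp (-(θ * n))) = ENNReal.ofReal (Real.exp (-θ)) ^ n := fun n => by
    rw [← ENNReal.ofReal_pow (Real.exp_nonneg _), ← Real.exp_nat_mul]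
    ring_nf
  simp_rw [hpow, ENNReal.tsum_geometric]
  exact ENNReal.inv_ne_top.2 (tsub_pos_of_lt hq).ne'

lemma exists_lt_measure_pos_of_ofReal_lt_lintegral {μ : Measure α} [IsProbabilityMeasure μ]
    {f : α → ℝ≥0∞} {s : ℝ} (h : ENNReal.ofReal s < ∫⁻ x, f x ∂μ) :
    ∃ r, s < r ∧ 0 < μ {x | ENNReal.ofReal r < f x} := by
  by_contra! H
  refine h.not_ge (ge_of_tendsto ((ENNReal.continuous_ofReal.tendsto s).mono_left
    (nhdsWithin_le_nhds (s := Ioi s))) ?_)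
  filter_upwards [self_mem_nhdsWithin] with r (hr : s < r)
  calc ∫⁻ x, f x ∂μ ≤ ∫⁻ _, ENNReal.ofReal r ∂μ :=
        lintegral_mono_ae (by simpa only [ae_iff, not_le] using nonpos_iff_eq_zero.1 (H r hr))
    _ = ENNReal.ofReal r := by simp

lemma measure_le_of_ofReal_lt_negLogMeas (ν : Measure α) [IsFiniteMeasure ν] {S : Set α}
    {t : ℝ} (h : ENNReal.ofReal t < negLogMeas ν S) :
    ν S ≤ ENNReal.ofReal (Real.exp (-t)) := by
  unfold negLogMeas at h
  split_ifs at h with h0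
  · simp [h0]
  have hpos : 0 < (ν S).toReal := ENNReal.toReal_pos h0 (measure_ne_top ν S)
  rw [ENNReal.ofReal_lt_ofReal_iff'] at h
  rw [← ENNReal.ofReal_toReal (measure_ne_top ν S)]
  exact ENNReal.ofReal_le_ofReal ((Real.log_lt_iff_lt_exp hpos).1 (by linarith [h.1])).le

end MeasureLemmas

section GenericPoints

variable [MeasurableSpace X] [OpensMeasurableSpace X] {T : X → X}

lemma empMeas_univ_le_one {α : Type*} [MeasurableSpace α] (T : α → α) (x : α) (n : ℕ) :
    empMeas T x n univ ≤ 1 := by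
  simp only [empMeas, Measure.smul_apply, Measure.finsetSum_apply, measure_univ,
    Finset.sum_const, Finset.card_range, nsmul_eq_mul, mul_one, smul_eq_mul]
  exact ENNReal.inv_mul_le_one _

lemma integral_empMeas (T : X → X) (x : X) (n : ℕ) (f : X →ᵇ ℝ) :
    ∫ y, f y ∂(empMeas T x n) = birkhoffAverage ℝ T f n x := by
  rw [empMeas, integral_smul_measure, integral_finsetSum_measure fun j _ => f.integrable _]
  simp [birkhoffAverage, birkhoffSum]

lemma BoundedContinuousFunction.lipschitzWith_integral {ν : Measure X} [IsFiniteMeasure ν]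
    (hν : ν univ ≤ 1) : LipschitzWith 1 fun f : X →ᵇ ℝ => ∫ x, f x ∂ν := by
  refine LipschitzWith.of_dist_le_mul fun f g => ?_
  rw [dist_eq_norm, dist_eq_norm, ← integral_sub (f.integrable ν) (g.integrable ν)]
  calc ‖∫ x, f x - g x ∂ν‖ ≤ ν.real univ * ‖f - g‖ :=
        (f - g).norm_integral_le_mul_norm ν
    _ ≤ 1 * ‖f - g‖ := by
      gcongr
      exact ENNReal.toReal_le_of_le_ofReal zero_le_one (by simpa using hν)
    _ = _ := by simp

lemma mem_genPts_of_dense (μ : Measure X) [IsProbabilityMeasure μ] {D : Set (X →ᵇ ℝ)}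
    (hD : Dense D) {x : X}
    (hx : ∀ f ∈ D, Tendsto (birkhoffAverage ℝ T f · x) atTop (𝓝 (∫ y, f y ∂μ))) :
    x ∈ genPts T μ := by
  refine FiniteMeasure.tendsto_iff_forall_integral_tendsto.2 fun f => ?_
  -- The test functions along which the empirical measures converge form a closed set, because
  -- integration against the empirical measures is uniformly 1-Lipschitz.
  have hequi : Equicontinuous fun n (f : X →ᵇ ℝ) => ∫ y, f y ∂(empMeas T x n) :=
    (LipschitzWith.uniformEquicontinuous _ 1 fun n => by
      have := empMeas_finite T x n
      exact lipschitzWith_integral (empMeas_univ_le_one T x n)).equicontinuous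
  have hclosed := hequi.isClosed_setOfPred_tendsto (l := atTop)
    (lipschitzWith_integral (by simp : μ univ ≤ 1)).continuous
  exact hclosed.closure_subset_iff.2 (fun f hf => by simpa [integral_empMeas] using hx f hf) (hD f)

theorem ae_mem_genPts [CompactSpace X] {μ : Measure X} [IsProbabilityMeasure μ]
    (hμ : Ergodic T μ) : ∀ᵐ x ∂μ, x ∈ genPts T μ := by
  have : TopologicalSpace.SeparableSpace (X →ᵇ ℝ) :=
    (ContinuousMap.isometryEquivBoundedOfCompact X ℝ).surjective.denseRange.separableSpace
      (ContinuousMap.isometryEquivBoundedOfCompact X ℝ).continuous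
  obtain ⟨D, hDc, hD⟩ := TopologicalSpace.exists_countable_dense (X →ᵇ ℝ)
  have h := (ae_ball_iff hDc).2 fun f _ =>
    ae_tendsto_birkhoffAverage hμ f.continuous.measurable f.norm_coe_le_norm
  filter_upwards [h] with x hx
  exact mem_genPts_of_dense μ hD hx

end GenericPoints

section BowenMetric

variable (T : X → X) (n : ℕ)

lemma bowenDist_nonneg (x y : X) : 0 ≤ bowenDist T n x y :=
  Real.iSup_nonneg fun _ => Real.iSup_nonneg fun _ => dist_nonneg

lemma bowenDist_eq_dist (x y : X) :
    bowenDist T n x y = dist (fun j : Fin n => T^[j] x) (fun j : Fin n => T^[j] y) := by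
  set D := dist (fun j : Fin n => T^[j] x) (fun j : Fin n => T^[j] y)
  have hinner : ∀ j, ⨆ (_ : j ∈ Finset.range n), dist (T^[j] x) (T^[j] y) ≤ D := fun j =>
    Real.iSup_le (fun hj => dist_le_pi_dist (fun j : Fin n => T^[j] x) (fun j => T^[j] y)
      ⟨j, Finset.mem_range.1 hj⟩) dist_nonneg
  refine le_antisymm (Real.iSup_le hinner dist_nonneg)
    ((dist_pi_le_iff (bowenDist_nonneg T n x y)).2 fun j => ?_)
  calc dist (T^[j] x) (T^[j] y)
      = ⨆ (_ : (j : ℕ) ∈ Finset.range n), dist (T^[j] x) (T^[j] y) :=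
        by rw [ciSup_pos (Finset.mem_range.2 j.2)]
    _ ≤ bowenDist T n x y := le_ciSup (f := fun j : ℕ => ⨆ (_ : j ∈ Finset.range n), _)
        ⟨D, forall_mem_range.2 hinner⟩ (j : ℕ)

lemma bowenClosedBall_eq_preimage (x : X) (r : ℝ) :
    bowenClosedBall T n x r =
      (fun y (j : Fin n) => T^[j] y) ⁻¹' closedBall (fun j : Fin n => T^[j] x) r := by
  ext y
  simp [bowenClosedBall, bowenDist_eq_dist, dist_comm]

lemma disjoint_bowenClosedBall {x y : X} {r : ℝ} (h : 2 * r < bowenDist T n x y) :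
    Disjoint (bowenClosedBall T n x r) (bowenClosedBall T n y r) := by
  rw [bowenClosedBall_eq_preimage, bowenClosedBall_eq_preimage]
  exact (closedBall_disjoint_closedBall (by rw [bowenDist_eq_dist] at h; linarith)).preimage _

lemma exists_isBowenSeparated_subset_iUnion_bowenClosedBall (W : Set X) {r : ℝ} (hr : 0 ≤ r) :
    ∃ F ⊆ W, IsBowenSeparated T n r F ∧ W ⊆ ⋃ a ∈ F, bowenClosedBall T n a r := by
  let R : SetRel X X := {p | bowenDist T n p.1 p.2 ≤ r}
  have : R.IsRefl := ⟨fun x => by simp [R, bowenDist_eq_dist, hr]⟩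
  have : R.IsSymm := ⟨fun x y h => by simpa [R, bowenDist_eq_dist, dist_comm] using h⟩
  obtain ⟨F, hF⟩ := zorn_subset {F | F ⊆ W ∧ R.IsSeparated F} fun c hcS hc =>
    ⟨⋃₀ c, ⟨sUnion_subset fun s hs => (hcS hs).1,
      hc.pairwise_sUnion.2 fun s hs => (hcS hs).2⟩, fun s hs => subset_sUnion_of_mem hs⟩
  refine ⟨F, hF.prop.1, fun a ha b hb hab => not_le.1 (hF.prop.2 ha hb hab), fun y hy => ?_⟩
  obtain ⟨a, ha, hya : bowenDist T n y a ≤ r⟩ := SetRel.IsCover.of_maximal_isSeparated hF hy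
  exact mem_biUnion ha (by simpa [bowenClosedBall, bowenDist_eq_dist, dist_comm] using hya)

end BowenMetric

section Packing

variable (T : X → X) (n : ℕ)

lemma exists_finset_isBowenSeparated_exp_le_card [MeasurableSpace X] (μ : Measure X)
    {W : Set X} {ε r s : ℝ} (hε : 0 < ε)
    (hball : ∀ x ∈ W, μ (bowenBall T n x ε) ≤ ENNReal.ofReal (Real.exp (-(r * n))))
    (hW : ENNReal.ofReal (Real.exp (-((r - s) * n))) ≤ μ W) :
    ∃ G : Finset X, ↑G ⊆ W ∧ IsBowenSeparated T n (ε / 5) G ∧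
      Real.exp (s * n) ≤ G.card := by
  obtain ⟨F, hFW, hFsep, hFcov⟩ :=
    exists_isBowenSeparated_subset_iUnion_bowenClosedBall T n W (r := ε / 5) (by positivity)
  rcases F.finite_or_infinite with hF | hF
  · refine ⟨hF.toFinset, by simpa using hFW, by simpa using hFsep, ?_⟩
    have hcov : W ⊆ ⋃ a ∈ hF.toFinset, bowenBall T n a ε := by
      refine hFcov.trans (iUnion₂_mono' fun a ha => ⟨a, by simpa using ha, fun y hy => ?_⟩)
      exact show bowenDist T n a y < ε from lt_of_le_of_lt hy (by linarith)
    have hmeas : μ W ≤ hF.toFinset.card * ENNReal.ofReal (Real.exp (-(r * n))) :=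
      calc μ W ≤ ∑ a ∈ hF.toFinset, μ (bowenBall T n a ε) :=
            (measure_mono hcov).trans (measure_biUnion_finset_le _ _)
        _ ≤ ∑ _a ∈ hF.toFinset, ENNReal.ofReal (Real.exp (-(r * n))) :=
            Finset.sum_le_sum fun a ha => hball a (hFW (by simpa using ha))
        _ = _ := by rw [Finset.sum_const, nsmul_eq_mul]
    have h := hW.trans hmeas
    rw [← ENNReal.ofReal_natCast, ← ENNReal.ofReal_mul (by positivity),
      ENNReal.ofReal_le_ofReal_iff (by positivity)] at h
    calc Real.exp (s * n) = Real.exp (-((r - s) * n)) * Real.exp (r * n) := by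
          rw [← Real.exp_add]; ring_nf
      _ ≤ hF.toFinset.card * Real.exp (-(r * n)) * Real.exp (r * n) := by gcongr
      _ = hF.toFinset.card := by rw [mul_assoc, ← Real.exp_add]; simp
  · obtain ⟨G, hGF, hGcard⟩ := hF.exists_subset_card_eq ⌈Real.exp (s * n)⌉₊
    exact ⟨G, hGF.trans hFW, fun a ha b hb => hFsep a (hGF ha) b (hGF hb),
      hGcard ▸ Nat.le_ceil _⟩

lemma weightSum_image_prodMk {α : Type*} (s : ℝ) (G : Finset α) :
    weightSum s ((·, n) '' (G : Set α)) = G.card * ENNReal.ofReal (Real.exp (-(s * n))) := by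
  have hinj : InjOn (·, n) (G : Set α) := fun a _ b _ h => congrArg Prod.fst h
  have hconst : ∀ p : ((·, n) '' (G : Set α)),
      ENNReal.ofReal (Real.exp (-(s * (p : α × ℕ).2))) =
        ENNReal.ofReal (Real.exp (-(s * n))) := by
    rintro ⟨_, a, _, rfl⟩
    rfl
  rw [weightSum, tsum_congr hconst, ENNReal.tsum_const, ← Set.encard, hinj.encard_image,
    Set.encard_coe_eq_coe_finsetCard]
  simp

lemma card_mul_le_packPre {Z : Set X} {G : Finset X} {s δ : ℝ} {N : ℕ} (hGZ : ↑G ⊆ Z)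
    (hG : IsBowenSeparated T n (2 * δ) G) (hN : N ≤ n) :
    G.card * ENNReal.ofReal (Real.exp (-(s * n))) ≤ packPre T Z s N δ := by
  rw [← weightSum_image_prodMk]
  refine le_iSup₂_of_le ((·, n) '' (G : Set X)) ⟨G.countable_toSet.image _, ?_, ?_⟩ le_rfl
  · rintro _ ⟨a, ha, rfl⟩
    exact ⟨hN, hGZ ha⟩
  · rintro _ ⟨a, ha, rfl⟩ _ ⟨b, hb, rfl⟩ hab
    exact disjoint_bowenClosedBall T n (hG a ha b hb fun h => hab (h ▸ rfl))

lemma one_le_packPre [MeasurableSpace X] (μ : Measure X) {Z W : Set X} {ε r s : ℝ} {N : ℕ}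
    (hε : 0 < ε) (hN : N ≤ n) (hWZ : W ⊆ Z)
    (hball : ∀ x ∈ W, μ (bowenBall T n x ε) ≤ ENNReal.ofReal (Real.exp (-(r * n))))
    (hW : ENNReal.ofReal (Real.exp (-((r - s) * n))) ≤ μ W) :
    1 ≤ packPre T Z s N (ε / 10) := by
  obtain ⟨G, hGW, hGsep, hGcard⟩ :=
    exists_finset_isBowenSeparated_exp_le_card T n μ hε hball hW
  refine le_trans ?_ (card_mul_le_packPre T n (hGW.trans hWZ)
    (by rwa [show 2 * (ε / 10) = ε / 5 by ring]) hN)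
  calc (1 : ℝ≥0∞) = ENNReal.ofReal (Real.exp (s * n) * Real.exp (-(s * n))) := by
        rw [← Real.exp_add]; simp
    _ ≤ ENNReal.ofReal (G.card * Real.exp (-(s * n))) := by gcongr
    _ = _ := by rw [ENNReal.ofReal_mul (Nat.cast_nonneg _), ENNReal.ofReal_natCast]

end Packing

section LocalEntropy

variable [MeasurableSpace X] (T : X → X) (μ : Measure X) (ε : ℝ)

noncomputable def bkLocalUpper (x : X) : ℝ≥0∞ :=
  limsup (fun n => negLogMeas μ (bowenBall T n x ε) / n) atTop

lemma bkUpper_eq_lintegral_bkLocalUpper :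
    bkUpper T μ ε = ∫⁻ x, bkLocalUpper T μ ε x ∂μ := rfl

lemma frequently_measure_bowenBall_le [IsFiniteMeasure μ] {x : X} {r : ℝ} (hr : 0 ≤ r)
    (hx : ENNReal.ofReal r < bkLocalUpper T μ ε x) :
    ∃ᶠ n : ℕ in atTop, μ (bowenBall T n x ε) ≤ ENNReal.ofReal (Real.exp (-(r * n))) := by
  refine ((frequently_lt_of_lt_limsup (by isBoundedDefault) hx).and_eventually
    (eventually_ge_atTop 1)).mono fun n ⟨hn, hn1⟩ => measure_le_of_ofReal_lt_negLogMeas μ ?_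
  rw [ENNReal.ofReal_mul hr, ENNReal.ofReal_natCast]
  exact (ENNReal.lt_div_iff_mul_lt (Or.inl (by positivity))
    (Or.inl (ENNReal.natCast_ne_top n))).1 hn

lemma one_le_packCP [IsFiniteMeasure μ] {W : Set X} {r s : ℝ} (hε : 0 < ε) (hr : 0 ≤ r)
    (hsr : s < r) (hW : 0 < μ {x ∈ W | ENNReal.ofReal r < bkLocalUpper T μ ε x}) :
    1 ≤ packCP T W s (ε / 10) := by
  refine le_iInf fun N => ?_
  set E : ℕ → Set X := fun n => {x ∈ {x ∈ W | ENNReal.ofReal r < bkLocalUpper T μ ε x} |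
    μ (bowenBall T n x ε) ≤ ENNReal.ofReal (Real.exp (-(r * n)))}
  have hE : {x ∈ W | ENNReal.ofReal r < bkLocalUpper T μ ε x} ⊆ limsup E atTop := fun x hx =>
    mem_limsup_iff_frequently_mem.2
      ((frequently_measure_bowenBall_le T μ ε hr hx.2).mono fun n hn => ⟨hx, hn⟩)
  obtain ⟨n, hn, hNn⟩ := ((frequently_le_measure_of_subset_limsup μ
    (tsum_ofReal_exp_neg_mul_ne_top (sub_pos.2 hsr)) hE hW).and_eventually
    (eventually_ge_atTop N)).exists
  exact one_le_packPre T n μ hε hNn (fun x hx => hx.1.1) (fun x hx => hx.2) hn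

lemma one_le_packOuter [IsFiniteMeasure μ] {Z : Set X} {r s : ℝ} (hε : 0 < ε) (hr : 0 ≤ r)
    (hsr : s < r) (hZ : 0 < μ {x ∈ Z | ENNReal.ofReal r < bkLocalUpper T μ ε x}) :
    1 ≤ packOuter T Z s (ε / 10) := by
  refine le_iInf₂ fun Zs hZs => ?_
  obtain ⟨i, hi⟩ : ∃ i, 0 < μ {x ∈ Zs i | ENNReal.ofReal r < bkLocalUpper T μ ε x} := by
    by_contra! h
    refine hZ.ne' (measure_mono_null (fun x hx => ?_)
      (measure_iUnion_null fun i => nonpos_iff_eq_zero.1 (h i)))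
    obtain ⟨i, hi⟩ := mem_iUnion.1 (hZs hx.1)
    exact mem_iUnion.2 ⟨i, hi, hx.2⟩
  exact (one_le_packCP T μ ε hε hr hsr hi).trans (ENNReal.le_tsum i)

end LocalEntropy

theorem stmt_12_general {X : Type*} [MetricSpace X] [CompactSpace X] [MeasurableSpace X] [BorelSpace X]
    (T : X → X) (μ : Measure X) [IsProbabilityMeasure μ]
    (hμ : Ergodic T μ) (ε : ℝ) (hε : 0 < ε) :
    bkUpper T μ ε ≤ packEnt T (genPts T μ) (ε / 10) := by
  refine le_sInf ?_
  rintro _ ⟨s, hs, rfl, hpack⟩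
  by_contra! hlt
  rw [bkUpper_eq_lintegral_bkLocalUpper] at hlt
  obtain ⟨r, hsr, hr⟩ := exists_lt_measure_pos_of_ofReal_lt_lintegral hlt
  have hgen : μ {x ∈ genPts T μ | ENNReal.ofReal r < bkLocalUpper T μ ε x} =
      μ {x | ENNReal.ofReal r < bkLocalUpper T μ ε x} := by
    rw [ofPred_and, ofPred_mem_eq, inter_comm]
    exact measure_inter_conull (ae_iff.1 (ae_mem_genPts hμ))
  have h := one_le_packOuter T μ ε hε (hs.trans hsr.le) hsr (hgen ▸ hr)
  rw [hpack] at h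
  exact absurd h (by simp)

/-- `h̄_μ^{BK}(T,ε) ≤ h_top^P(T, G_μ, d, ε/10)` for ergodic `μ`. -/
theorem stmt_12 {X : Type*} [MetricSpace X] [CompactSpace X] [MeasurableSpace X] [BorelSpace X]
    (T : X → X) (hT : Continuous T) (μ : Measure X) [IsProbabilityMeasure μ]
    (hμ : Ergodic T μ) (ε : ℝ) (hε : 0 < ε) :
    bkUpper T μ ε ≤ packEnt T (genPts T μ) (ε / 10) :=
  stmt_12_general T μ hμ ε hε
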